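/- arXiv:math/9809043 — 7 statements merged into one kernel-verified Lean document; each statement's English description precedes it below -/
import Mathlib

section
/- For any invertible matrices A, P and matrix Q with A = P - Q, and any integer m ≥ 1, the identity A⁻¹ = (P⁻¹Q)^m A⁻¹ (Q P⁻¹)^m + Σ_{k=0}^{2m-1} (P⁻¹Q)^k P⁻¹ holds. -/
theorem stmt_1 {K : Type*} [Field K] {n : ℕ} (A P Q : Matrix (Fin n) (Fin n) K)
    (hA : IsUnit A) (hP : IsUnit P) (hAPQ : A = P - Q) (m : ℕ) (hm : 1 ≤ m) :
    A⁻¹ = (P⁻¹ * Q) ^ m * A⁻¹ * (Q * P⁻¹) ^ m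
        + ∑ k ∈ Finset.range (2 * m), (P⁻¹ * Q) ^ k * P⁻¹ := by
  have hAi : A * A⁻¹ = 1 := Matrix.mul_nonsing_inv A ((Matrix.isUnit_iff_isUnit_det A).mp hA)
  have hAi' : A⁻¹ * A = 1 := Matrix.nonsing_inv_mul A ((Matrix.isUnit_iff_isUnit_det A).mp hA)
  have hPi : P * P⁻¹ = 1 := Matrix.mul_nonsing_inv P ((Matrix.isUnit_iff_isUnit_det P).mp hP)
  have hPi' : P⁻¹ * P = 1 := Matrix.nonsing_inv_mul P ((Matrix.isUnit_iff_isUnit_det P).mp hP)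
  -- key recursion
  have key : A⁻¹ = P⁻¹ + P⁻¹ * Q * A⁻¹ := by
    have h : (P⁻¹ + P⁻¹ * Q * A⁻¹) * A = 1 := by
      calc (P⁻¹ + P⁻¹ * Q * A⁻¹) * A
          = P⁻¹ * A + P⁻¹ * Q * (A⁻¹ * A) := by noncomm_ring
        _ = P⁻¹ * (P - Q) + P⁻¹ * Q := by rw [hAi', hAPQ]; noncomm_ring
        _ = P⁻¹ * P := by noncomm_ring
        _ = 1 := hPi'
    calc A⁻¹ = 1 * A⁻¹ := by rw [Matrix.one_mul]
      _ = (P⁻¹ + P⁻¹ * Q * A⁻¹) * A * A⁻¹ := by rw [h]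
      _ = (P⁻¹ + P⁻¹ * Q * A⁻¹) * (A * A⁻¹) := by rw [Matrix.mul_assoc]
      _ = P⁻¹ + P⁻¹ * Q * A⁻¹ := by rw [hAi, Matrix.mul_one]
  -- iterate: for all j
  have iter : ∀ j : ℕ, A⁻¹ = (P⁻¹ * Q) ^ j * A⁻¹
      + ∑ k ∈ Finset.range j, (P⁻¹ * Q) ^ k * P⁻¹ := by
    intro j
    induction j with
    | zero => simp
    | succ j ih =>
      rw [Finset.sum_range_succ]
      calc A⁻¹ = (P⁻¹ * Q) ^ j * A⁻¹ + ∑ k ∈ Finset.range j, (P⁻¹ * Q) ^ k * P⁻¹ := ih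
        _ = (P⁻¹ * Q) ^ j * (P⁻¹ + P⁻¹ * Q * A⁻¹)
            + ∑ k ∈ Finset.range j, (P⁻¹ * Q) ^ k * P⁻¹ := by rw [← key]
        _ = ((P⁻¹ * Q) ^ (j + 1) * A⁻¹
            + (∑ k ∈ Finset.range j, (P⁻¹ * Q) ^ k * P⁻¹ + (P⁻¹ * Q) ^ j * P⁻¹)) := by
            rw [pow_succ]; noncomm_ring
  -- commutation
  have comm : P⁻¹ * Q * A⁻¹ = A⁻¹ * (Q * P⁻¹) := by
    have h : Q * P⁻¹ * A = A * (P⁻¹ * Q) := by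
      rw [hAPQ]
      have h1 : (P - Q) * (P⁻¹ * Q) = Q - Q * (P⁻¹ * Q) := by
        rw [Matrix.sub_mul, ← Matrix.mul_assoc, hPi, Matrix.one_mul]
      have h2 : Q * P⁻¹ * (P - Q) = Q - Q * (P⁻¹ * Q) := by
        rw [Matrix.mul_sub, Matrix.mul_assoc, Matrix.mul_assoc, hPi', Matrix.mul_one,
          ← Matrix.mul_assoc]
      rw [h1, h2]
    calc P⁻¹ * Q * A⁻¹ = A⁻¹ * (A * (P⁻¹ * Q)) * A⁻¹ := by
          rw [← Matrix.mul_assoc, hAi', Matrix.one_mul, Matrix.mul_assoc]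
      _ = A⁻¹ * (Q * P⁻¹ * A) * A⁻¹ := by rw [h]
      _ = A⁻¹ * (Q * P⁻¹) * (A * A⁻¹) := by noncomm_ring
      _ = A⁻¹ * (Q * P⁻¹) := by rw [hAi, Matrix.mul_one]
  have commpow : ∀ j : ℕ, (P⁻¹ * Q) ^ j * A⁻¹ = A⁻¹ * (Q * P⁻¹) ^ j := by
    intro j
    induction j with
    | zero => simp
    | succ j ih =>
      rw [pow_succ, pow_succ, Matrix.mul_assoc, comm, ← Matrix.mul_assoc, ih,
        Matrix.mul_assoc]
  have := iter (2 * m)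
  rw [show (2 * m) = m + m from two_mul m, pow_add, Matrix.mul_assoc, commpow m,
    ← Matrix.mul_assoc, ← two_mul] at this
  exact this
end

section
/- Let A = P - Q with A, P invertible, and define for a matrix W and integer m ≥ 1 the preconditioner M⁻¹ = (P⁻¹Q)^m W (Q P⁻¹)^m + Σ_{k=0}^{2m-1} (P⁻¹Q)^k P⁻¹. Then A M⁻¹ - I = (Q P⁻¹)^m (A W - I) (Q P⁻¹)^m. -/
theorem stmt_2 {K : Type*} [Field K] {n : ℕ} (A P Q W : Matrix (Fin n) (Fin n) K)
    (hA : IsUnit A) (hP : IsUnit P) (hAPQ : A = P - Q) (m : ℕ) (hm : 1 ≤ m) :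
    A * ((P⁻¹ * Q) ^ m * W * (Q * P⁻¹) ^ m
        + ∑ k ∈ Finset.range (2 * m), (P⁻¹ * Q) ^ k * P⁻¹) - 1
      = (Q * P⁻¹) ^ m * (A * W - 1) * (Q * P⁻¹) ^ m := by
  have hPinv : P * P⁻¹ = 1 := Matrix.mul_nonsing_inv P (Matrix.isUnit_iff_isUnit_det P |>.mp hP)
  have hPinv' : P⁻¹ * P = 1 := Matrix.nonsing_inv_mul P (Matrix.isUnit_iff_isUnit_det P |>.mp hP)
  set x := Q * P⁻¹ with hx
  set y := P⁻¹ * Q with hy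
  have hAP : A * P⁻¹ = 1 - x := by
    rw [hAPQ, Matrix.sub_mul, hPinv, hx]
  have hbase : A * y = x * A := by
    rw [hAPQ, hx, hy]
    rw [Matrix.sub_mul, Matrix.mul_sub]
    rw [show P * (P⁻¹ * Q) = Q by rw [← mul_assoc, hPinv, one_mul]]
    rw [show Q * P⁻¹ * P = Q by rw [mul_assoc, hPinv', mul_one], mul_assoc]
  have hcomm : ∀ k : ℕ, A * y ^ k = x ^ k * A := by
    intro k
    induction k with
    | zero => simp
    | succ k ih =>
      rw [pow_succ, pow_succ, ← mul_assoc, ih, mul_assoc, hbase, ← mul_assoc]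
  have hsum : A * ∑ k ∈ Finset.range (2 * m), y ^ k * P⁻¹ = 1 - x ^ (2 * m) := by
    rw [Finset.mul_sum]
    have : ∀ k ∈ Finset.range (2 * m), A * (y ^ k * P⁻¹) = x ^ k * (1 - x) := by
      intro k _
      rw [← mul_assoc, hcomm, mul_assoc, hAP]
    rw [Finset.sum_congr rfl this]
    have := geom_sum_mul x (2 * m)
    have h2 : (∑ k ∈ Finset.range (2 * m), x ^ k * (1 - x))
        = -((∑ k ∈ Finset.range (2 * m), x ^ k) * (x - 1)) := by
      rw [Finset.sum_mul, ← Finset.sum_neg_distrib]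
      exact Finset.sum_congr rfl fun k _ => by rw [← neg_sub x 1, mul_neg]
    rw [h2, this]; noncomm_ring
  rw [mul_add, hsum, ← mul_assoc, ← mul_assoc, hcomm m, two_mul, pow_add]
  noncomm_ring
end

section
/- With A = P - Q, A and P invertible, m ≥ 1, and M⁻¹ = (P⁻¹Q)^m W (QP⁻¹)^m + Σ_{k=0}^{2m-1}(P⁻¹Q)^k P⁻¹, one has the operator-norm bound ‖A M⁻¹ - I‖ ≤ ‖Q P⁻¹‖^{2m} · ‖A W - I‖. In particular, if ‖P⁻¹Q‖ < 1 (equivalently the corresponding bound on ‖QP⁻¹‖ holds), M⁻¹ is a better approximate inverse of A than W in this norm. -/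
noncomputable def opNorm {n : ℕ} (M : Matrix (Fin n) (Fin n) ℝ) : ℝ :=
  ‖Matrix.toEuclideanCLM (𝕜 := ℝ) M‖

theorem stmt_3 {n : ℕ} (A P Q W : Matrix (Fin n) (Fin n) ℝ)
    (hA : IsUnit A) (hP : IsUnit P) (hAPQ : A = P - Q) (m : ℕ) (hm : 1 ≤ m) :
    opNorm (A * ((P⁻¹ * Q) ^ m * W * (Q * P⁻¹) ^ m
        + ∑ k ∈ Finset.range (2 * m), (P⁻¹ * Q) ^ k * P⁻¹) - 1)
      ≤ opNorm (Q * P⁻¹) ^ (2 * m) * opNorm (A * W - 1) := by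
  have hPd : IsUnit P.det := (Matrix.isUnit_iff_isUnit_det P).mp hP
  have hPinv : P * P⁻¹ = 1 := Matrix.mul_nonsing_inv P hPd
  have hPinv' : P⁻¹ * P = 1 := Matrix.nonsing_inv_mul P hPd
  set T := Q * P⁻¹ with hT
  have hAP : A * P⁻¹ = 1 - T := by rw [hAPQ, Matrix.sub_mul, hPinv]
  have hsemi : SemiconjBy A (P⁻¹ * Q) T := by
    show A * (P⁻¹ * Q) = T * A
    rw [hAPQ, hT]
    rw [Matrix.mul_sub, Matrix.sub_mul, ← mul_assoc, hPinv, one_mul,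
      mul_assoc Q P⁻¹ P, hPinv', mul_one, mul_assoc]
  have hcomm : ∀ k : ℕ, A * (P⁻¹ * Q) ^ k = T ^ k * A := fun k =>
    (hsemi.pow_right k)
  have hsemi' : SemiconjBy P⁻¹ T (P⁻¹ * Q) := by
    show P⁻¹ * T = (P⁻¹ * Q) * P⁻¹
    rw [hT, mul_assoc]
  have hswap : ∀ k : ℕ, (P⁻¹ * Q) ^ k * P⁻¹ = P⁻¹ * T ^ k := fun k =>
    ((hsemi'.pow_right k)).symm
  have hsum : A * ∑ k ∈ Finset.range (2 * m), (P⁻¹ * Q) ^ k * P⁻¹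
      = 1 - T ^ (2 * m) := by
    rw [Finset.mul_sum]
    have : ∀ k ∈ Finset.range (2 * m),
        A * ((P⁻¹ * Q) ^ k * P⁻¹) = T ^ k * (1 - T) := by
      intro k _
      rw [hswap, ← mul_assoc, hAP,
        (((Commute.one_left T).sub_left (Commute.refl T)).pow_right k).eq]
    rw [Finset.sum_congr rfl this, ← Finset.sum_mul]
    have hg := geom_sum_mul T (2 * m)
    calc (∑ i ∈ Finset.range (2 * m), T ^ i) * (1 - T)
        = -((∑ i ∈ Finset.range (2 * m), T ^ i) * (T - 1)) := by noncomm_ring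
      _ = 1 - T ^ (2 * m) := by rw [hg]; noncomm_ring
  have key : A * ((P⁻¹ * Q) ^ m * W * (Q * P⁻¹) ^ m
        + ∑ k ∈ Finset.range (2 * m), (P⁻¹ * Q) ^ k * P⁻¹) - 1
      = T ^ m * (A * W - 1) * T ^ m := by
    rw [Matrix.mul_add, hsum, ← mul_assoc, ← mul_assoc, hcomm]
    have h2m : T ^ (2 * m) = T ^ m * T ^ m := by rw [two_mul, pow_add]
    rw [h2m]
    noncomm_ring
  rw [key]
  have hmul : ∀ X Y : Matrix (Fin n) (Fin n) ℝ,
      opNorm (X * Y) ≤ opNorm X * opNorm Y := by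
    intro X Y; unfold opNorm; rw [map_mul]; exact norm_mul_le _ _
  have hpow : opNorm (T ^ m) ≤ opNorm T ^ m := by
    unfold opNorm; rw [map_pow]
    exact norm_pow_le' _ (lt_of_lt_of_le one_pos hm)
  have hnn : ∀ X : Matrix (Fin n) (Fin n) ℝ, 0 ≤ opNorm X := fun X => norm_nonneg _
  calc opNorm (T ^ m * (A * W - 1) * T ^ m)
      ≤ opNorm (T ^ m * (A * W - 1)) * opNorm (T ^ m) := hmul _ _
    _ ≤ opNorm (T ^ m) * opNorm (A * W - 1) * opNorm (T ^ m) := by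
        gcongr
        · exact hnn _
        · exact hmul _ _
    _ ≤ opNorm T ^ m * opNorm (A * W - 1) * opNorm T ^ m := by
        gcongr <;> first | exact hpow | exact hnn _ | exact mul_nonneg (pow_nonneg (hnn _) m) (hnn _) | exact pow_nonneg (hnn _) m
    _ = opNorm T ^ (2 * m) * opNorm (A * W - 1) := by
        rw [two_mul, pow_add]; ring
end

section
/- For the symmetric Gauss–Seidel splitting of a symmetric positive definite matrix A = P - Q with P = (D+L)D⁻¹(D+Lᵀ) and Q = L D⁻¹ Lᵀ, every eigenvalue λ of P⁻¹Q satisfies 0 ≤ λ < 1; consequently the iteration matrix P⁻¹Q has spectral radius strictly less than 1. -/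
open Matrix ComplexOrder

open scoped MatrixOrder in
private lemma psd_map' {n : ℕ} {S : Matrix (Fin n) (Fin n) ℝ} (h : S.PosSemidef) :
    (S.map Complex.ofReal).PosSemidef := by
  obtain ⟨B, hB⟩ := CStarAlgebra.nonneg_iff_eq_star_mul_self.mp h.nonneg
  have h1 : (B.map Complex.ofReal)ᴴ = Bᴴ.map Complex.ofReal :=
    (conjTranspose_map Complex.ofReal (fun x => (Complex.conj_ofReal x).symm)).symm
  have h2 : S.map Complex.ofReal = (B.map Complex.ofReal)ᴴ * B.map Complex.ofReal := by
    rw [h1, hB, star_eq_conjTranspose]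
    exact Matrix.map_mul (f := Complex.ofRealHom)
  rw [h2]
  exact posSemidef_conjTranspose_mul_self _

private lemma pd_map' {n : ℕ} {S : Matrix (Fin n) (Fin n) ℝ} (h : S.PosDef) :
    (S.map Complex.ofReal).PosDef := by
  have hdet : (S.map Complex.ofReal).det ≠ 0 := by
    rw [show (S.map Complex.ofReal) = Complex.ofRealHom.mapMatrix S from rfl,
      ← RingHom.map_det]
    simpa using h.det_pos.ne'
  have hpsd := psd_map' h.posSemidef
  refine .of_dotProduct_mulVec_pos hpsd.1 fun x hx => ?_
  rcases (hpsd.dotProduct_mulVec_nonneg x).lt_or_eq with h1 | h1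
  · exact h1
  · exfalso
    have hx0 : (S.map Complex.ofReal) *ᵥ x = 0 :=
      (hpsd.dotProduct_mulVec_zero_iff x).mp h1.symm
    have hinj : Function.Injective ((S.map Complex.ofReal).mulVec) :=
      (Matrix.mulVec_injective_iff_isUnit).mpr
        ((Matrix.isUnit_iff_isUnit_det _).mpr hdet.isUnit)
    exact hx (hinj (by simpa using hx0))

theorem stmt_9 {n : ℕ} (A D L : Matrix (Fin n) (Fin n) ℝ)
    (hA : A.PosDef)
    (hD : D = Matrix.diagonal (fun i => A i i))
    (hL : ∀ i j : Fin n, i ≤ j → L i j = 0)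
    (hdecomp : A = D + L + Lᵀ) :
    (∀ μ : ℝ, (∃ v : Fin n → ℝ, v ≠ 0 ∧
        (((D + L) * D⁻¹ * (D + Lᵀ))⁻¹ * (L * D⁻¹ * Lᵀ)).mulVec v = μ • v) →
        0 ≤ μ ∧ μ < 1) ∧
    (∀ μ : ℂ, μ ∈ spectrum ℂ
        ((((D + L) * D⁻¹ * (D + Lᵀ))⁻¹ * (L * D⁻¹ * Lᵀ)).map (Complex.ofReal)) →
        ‖μ‖ < 1) := by
  have hdiag : ∀ i, 0 < A i i := by
    intro i
    have := hA.dotProduct_mulVec_pos (x := Pi.single i 1) (by simp [Function.ne_iff])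
    simpa using this
  have hDpd : D.PosDef := by rw [hD]; exact .diagonal hdiag
  have hQ : (L * D⁻¹ * Lᵀ).PosSemidef := by
    have := (hDpd.inv.posSemidef).mul_mul_conjTranspose_same L
    simpa [conjTranspose_eq_transpose_of_trivial] using this
  set P : Matrix (Fin n) (Fin n) ℝ := (D + L) * D⁻¹ * (D + Lᵀ) with hPdef
  set Q : Matrix (Fin n) (Fin n) ℝ := L * D⁻¹ * Lᵀ with hQdef
  have hDD : D * D⁻¹ = 1 := Matrix.mul_nonsing_inv D hDpd.det_pos.ne'.isUnit
  have hDD' : D⁻¹ * D = 1 := Matrix.nonsing_inv_mul D hDpd.det_pos.ne'.isUnit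
  have hPA : P = A + Q := by
    have expand : P = D * (D⁻¹ * D) + D * D⁻¹ * Lᵀ + (L * (D⁻¹ * D) + L * D⁻¹ * Lᵀ) := by
      rw [hPdef]; noncomm_ring
    rw [expand, hDD, hDD', mul_one, mul_one, one_mul, hdecomp, ← hQdef]
    abel
  have hP : P.PosDef := by rw [hPA]; exact hA.add_posSemidef hQ
  have hPinv : P * P⁻¹ = 1 := Matrix.mul_nonsing_inv P hP.det_pos.ne'.isUnit
  constructor
  · rintro μ ⟨v, hv, hev⟩
    have hQv : Q *ᵥ v = μ • (P *ᵥ v) := by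
      have := congrArg (P.mulVec) hev
      rw [mulVec_mulVec, ← Matrix.mul_assoc, hPinv, Matrix.one_mul] at this
      rw [this, mulVec_smul]
    have hq : v ⬝ᵥ Q *ᵥ v = μ * (v ⬝ᵥ P *ᵥ v) := by
      rw [hQv, dotProduct_smul, smul_eq_mul]
    have hstar : ∀ w : Fin n → ℝ, star w = w := fun w => funext fun i => rfl
    have hp_pos : 0 < v ⬝ᵥ P *ᵥ v := by have := hP.dotProduct_mulVec_pos hv; rwa [hstar] at this
    have hq_nonneg : 0 ≤ v ⬝ᵥ Q *ᵥ v := by have := hQ.dotProduct_mulVec_nonneg v; rwa [hstar] at this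
    have ha_pos : 0 < v ⬝ᵥ A *ᵥ v := by have := hA.dotProduct_mulVec_pos hv; rwa [hstar] at this
    have hsplit : v ⬝ᵥ P *ᵥ v = v ⬝ᵥ A *ᵥ v + v ⬝ᵥ Q *ᵥ v := by
      rw [hPA, add_mulVec, dotProduct_add]
    constructor <;> nlinarith
  · intro μ hμ
    rw [spectrum.mem_iff] at hμ
    rw [Matrix.isUnit_iff_isUnit_det, isUnit_iff_ne_zero, not_not] at hμ
    obtain ⟨w, hw0, hw⟩ := (Matrix.exists_mulVec_eq_zero_iff).mpr hμ
    set P' := P.map Complex.ofReal with hP'def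
    set Q' := Q.map Complex.ofReal with hQ'def
    set A' := A.map Complex.ofReal with hA'def
    have hM' : ((P⁻¹ * Q).map Complex.ofReal) *ᵥ w = μ • w := by
      have : (algebraMap ℂ (Matrix (Fin n) (Fin n) ℂ) μ) *ᵥ w = μ • w := by
        rw [Algebra.algebraMap_eq_smul_one]
        simp [smul_mulVec]
      rw [sub_mulVec, sub_eq_zero] at hw
      rw [← hw, this]
    have hPM : P' * ((P⁻¹ * Q).map Complex.ofReal) = Q' := by
      rw [hP'def, hQ'def]
      have : ((P⁻¹ * Q).map Complex.ofReal) =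
          (P⁻¹.map Complex.ofReal) * (Q.map Complex.ofReal) :=
        Matrix.map_mul (f := Complex.ofRealHom)
      have h2 : P.map Complex.ofReal * P⁻¹.map Complex.ofReal = 1 := by
        rw [show P.map Complex.ofReal * P⁻¹.map Complex.ofReal = (P * P⁻¹).map Complex.ofReal from
          (Matrix.map_mul (f := Complex.ofRealHom)).symm, hPinv]
        simp [Matrix.map_one]
      rw [this, ← Matrix.mul_assoc, h2, Matrix.one_mul]
    have hQw : Q' *ᵥ w = μ • (P' *ᵥ w) := by
      have := congrArg (P'.mulVec) hM'
      rw [mulVec_mulVec, hPM] at this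
      rw [this, mulVec_smul]
    have hP' : P'.PosDef := pd_map' hP
    have hQ' : Q'.PosSemidef := psd_map' hQ
    have hA' : A'.PosDef := pd_map' hA
    have hsplit : star w ⬝ᵥ P' *ᵥ w = star w ⬝ᵥ A' *ᵥ w + star w ⬝ᵥ Q' *ᵥ w := by
      rw [hP'def, hA'def, hQ'def, hPA]
      rw [show ((A + Q).map Complex.ofReal) =
        A.map Complex.ofReal + Q.map Complex.ofReal from Matrix.map_add _ (by simp) _ _]
      rw [add_mulVec, dotProduct_add]
    set p := star w ⬝ᵥ P' *ᵥ w with hpdef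
    set q := star w ⬝ᵥ Q' *ᵥ w with hqdef
    set a := star w ⬝ᵥ A' *ᵥ w with hadef
    have hp_pos : 0 < p := hP'.dotProduct_mulVec_pos hw0
    have hq_nonneg : 0 ≤ q := hQ'.dotProduct_mulVec_nonneg w
    have ha_pos : 0 < a := hA'.dotProduct_mulVec_pos hw0
    have hqp : q = μ * p := by
      rw [hqdef, hQw, dotProduct_smul, smul_eq_mul]
    rw [Complex.lt_def] at hp_pos ha_pos
    rw [Complex.le_def] at hq_nonneg
    simp only [Complex.zero_re, Complex.zero_im] at hp_pos hq_nonneg ha_pos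
    have hpre : (0:ℝ) < p.re := hp_pos.1
    have hqre : (0:ℝ) ≤ q.re := hq_nonneg.1
    have hare : (0:ℝ) < a.re := ha_pos.1
    have hqlt : q.re < p.re := by
      have : p.re = a.re + q.re := by rw [hsplit]; simp [Complex.add_re]
      linarith
    have hpreal : p = (p.re : ℂ) := Complex.ext rfl (by simp [← hp_pos.2])
    have hqreal : q = (q.re : ℂ) := Complex.ext rfl (by simp [← hq_nonneg.2])
    have hpne : p ≠ 0 := by
      rw [hpreal]; exact_mod_cast hpre.ne'
    have hμeq : μ = ((q.re / p.re : ℝ) : ℂ) := by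
      field_simp
      rw [Complex.ofReal_div, ← hqreal, ← hpreal, hqp, mul_div_assoc, div_self hpne, mul_one]
    rw [hμeq]
    rw [Complex.norm_real, Real.norm_eq_abs, abs_of_nonneg (div_nonneg hqre hpre.le)]
    rw [div_lt_one hpre]
    exact hqlt
end

section
/- If A = P - Q with P symmetric positive definite and Q symmetric positive semidefinite, and if A is positive definite, then the spectral radius of P⁻¹Q is strictly less than 1. -/
open Matrix

lemma quad_map_aux {n : ℕ} (M : Matrix (Fin n) (Fin n) ℝ) (hM : Mᵀ = M) (x : Fin n → ℂ) :
    star x ⬝ᵥ (M.map (Complex.ofReal)) *ᵥ x =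
      (((fun i => (x i).re) ⬝ᵥ M *ᵥ (fun i => (x i).re)
        + (fun i => (x i).im) ⬝ᵥ M *ᵥ (fun i => (x i).im) : ℝ) : ℂ) := by
  have key : ∀ i j, M i j = M j i := fun i j => by conv_lhs => rw [← hM, transpose_apply]
  apply Complex.ext
  · simp [dotProduct, mulVec, Finset.mul_sum, Finset.sum_add_distrib, mul_comm, mul_left_comm]
  · simp only [dotProduct, mulVec, Finset.mul_sum, Complex.im_sum, Complex.mul_im,
      Pi.star_apply, Complex.star_def, Complex.conj_re, Complex.conj_im, map_apply,
      Complex.ofReal_im, Complex.ofReal_re, Complex.mul_re, mul_zero, zero_mul, sub_zero,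
      add_zero, zero_add]
    have h1 : (∑ i, ∑ j, (x i).re * (M i j * (x j).im)) =
        ∑ i, ∑ j, (x i).im * (M i j * (x j).re) := by
      rw [Finset.sum_comm]
      refine Finset.sum_congr rfl fun i _ => Finset.sum_congr rfl fun j _ => ?_
      rw [key j i]; ring
    simp only [neg_mul, ← sub_eq_add_neg, Finset.sum_sub_distrib, h1, sub_self]

theorem stmt_10 {n : ℕ} (P Q : Matrix (Fin n) (Fin n) ℝ)
    (hP : P.PosDef) (hQ : Q.PosSemidef) (hA : (P - Q).PosDef) :
    ∀ μ : ℂ, μ ∈ spectrum ℂ ((P⁻¹ * Q).map (Complex.ofReal)) → ‖μ‖ < 1 := by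
  intro μ hμ
  set M : Matrix (Fin n) (Fin n) ℂ := (P⁻¹ * Q).map Complex.ofReal with hMdef
  -- get an eigenvector
  rw [spectrum.mem_iff] at hμ
  rw [Matrix.isUnit_iff_isUnit_det, isUnit_iff_ne_zero, not_not,
    ← Matrix.exists_mulVec_eq_zero_iff] at hμ
  obtain ⟨v, hv, hveq⟩ := hμ
  have heig : M *ᵥ v = μ • v := by
    have := hveq
    rw [sub_mulVec, sub_eq_zero] at this
    rw [← this, Algebra.algebraMap_eq_smul_one, smul_mulVec, one_mulVec]
  -- P * (P⁻¹ * Q) = Q, complexified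
  have hPdet : P.det ≠ 0 := hP.det_pos.ne'
  have hPQ : (P.map Complex.ofReal) * M = Q.map Complex.ofReal := by
    rw [hMdef, show (Complex.ofReal : ℝ → ℂ) = ⇑Complex.ofRealHom from rfl,
      ← Matrix.map_mul, ← mul_assoc, mul_nonsing_inv _ (isUnit_iff_ne_zero.mpr hPdet), one_mul]
  have hQv : (Q.map Complex.ofReal) *ᵥ v = μ • ((P.map Complex.ofReal) *ᵥ v) := by
    rw [← hPQ, ← mulVec_mulVec, heig, mulVec_smul]
  -- quadratic forms
  set a : Fin n → ℝ := fun i => (v i).re with hadef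
  set b : Fin n → ℝ := fun i => (v i).im with hbdef
  have hPsym : Pᵀ = P := hP.1
  have hQsym : Qᵀ = Q := hQ.1
  have hAsym : (P - Q)ᵀ = P - Q := hA.1
  set p₀ : ℝ := a ⬝ᵥ P *ᵥ a + b ⬝ᵥ P *ᵥ b with hp₀
  set q₀ : ℝ := a ⬝ᵥ Q *ᵥ a + b ⬝ᵥ Q *ᵥ b with hq₀
  have hquadP := quad_map_aux P hPsym v
  have hquadQ := quad_map_aux Q hQsym v
  -- key identity: q₀ = μ * p₀
  have hkey : (q₀ : ℂ) = μ * (p₀ : ℂ) := by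
    rw [← hquadQ, ← hquadP, hQv, dotProduct_smul, smul_eq_mul]
  -- positivity facts
  have hvne : a ≠ 0 ∨ b ≠ 0 := by
    by_contra h
    push_neg at h
    apply hv
    funext i
    have h1 := congrFun h.1 i
    have h2 := congrFun h.2 i
    simp only [hadef, hbdef, Pi.zero_apply] at h1 h2
    exact Complex.ext h1 h2
  have hquad_pos : ∀ (R : Matrix (Fin n) (Fin n) ℝ), R.PosDef →
      0 < a ⬝ᵥ R *ᵥ a + b ⬝ᵥ R *ᵥ b := by
    intro R hR
    rcases hvne with ha | hb
    · have h1 : 0 < a ⬝ᵥ R *ᵥ a := by simpa using hR.dotProduct_mulVec_pos ha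
      have h2 : 0 ≤ b ⬝ᵥ R *ᵥ b := by simpa using hR.posSemidef.dotProduct_mulVec_nonneg b
      linarith
    · have h1 : 0 ≤ a ⬝ᵥ R *ᵥ a := by simpa using hR.posSemidef.dotProduct_mulVec_nonneg a
      have h2 : 0 < b ⬝ᵥ R *ᵥ b := by simpa using hR.dotProduct_mulVec_pos hb
      linarith
  have hp_pos : 0 < p₀ := hquad_pos P hP
  have hq_nonneg : 0 ≤ q₀ := by
    have h1 : 0 ≤ a ⬝ᵥ Q *ᵥ a := by simpa using hQ.dotProduct_mulVec_nonneg a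
    have h2 : 0 ≤ b ⬝ᵥ Q *ᵥ b := by simpa using hQ.dotProduct_mulVec_nonneg b
    rw [hq₀]; linarith
  have hpq : q₀ < p₀ := by
    have := hquad_pos (P - Q) hA
    simp only [sub_mulVec, dotProduct_sub] at this
    rw [hp₀, hq₀]; linarith
  -- conclude
  have hμ_eq : μ = ((q₀ / p₀ : ℝ) : ℂ) := by
    have hp₀ne : (p₀ : ℂ) ≠ 0 := by exact_mod_cast hp_pos.ne'
    rw [Complex.ofReal_div, eq_div_iff hp₀ne]
    rw [hkey]
  rw [hμ_eq]
  rw [Complex.norm_real, Real.norm_eq_abs, abs_of_nonneg (div_nonneg hq_nonneg hp_pos.le)]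
  rw [div_lt_one hp_pos]
  exact hpq
end

section
/- If A = P - Q with P symmetric positive definite, Q symmetric positive semidefinite, A positive definite, and W is any symmetric positive semidefinite matrix, then for all m ≥ 1 the preconditioned error contraction holds in the A-weighted sense: for any vector x, xᵀ(A M⁻¹ - I)ᵀ(A M⁻¹ - I)x ≤ ‖QP⁻¹‖^{4m} ‖AW - I‖² ‖x‖², where M⁻¹ = (P⁻¹Q)^m W (QP⁻¹)^m + Σ_{k=0}^{2m-1}(P⁻¹Q)^k P⁻¹. -/
open Matrix

private lemma comm_pow {n : ℕ} (P Q : Matrix (Fin n) (Fin n) ℝ) (hP : P * P⁻¹ = 1)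
    (hP' : P⁻¹ * P = 1) (m : ℕ) :
    P * (P⁻¹ * Q) ^ m = (Q * P⁻¹) ^ m * P := by
  induction m with
  | zero => simp
  | succ k ih =>
    rw [pow_succ, pow_succ, ← mul_assoc, ih]
    calc (Q * P⁻¹) ^ k * P * (P⁻¹ * Q) = (Q * P⁻¹)^k * ((P * P⁻¹) * Q) := by
          simp only [mul_assoc]
      _ = (Q * P⁻¹) ^ k * (Q * (P⁻¹ * P)) := by rw [hP, hP']; simp
      _ = (Q * P⁻¹) ^ k * (Q * P⁻¹) * P := by simp only [mul_assoc]

private lemma comm_pow2 {n : ℕ} (P Q : Matrix (Fin n) (Fin n) ℝ) (m : ℕ) :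
    Q * (P⁻¹ * Q) ^ m = (Q * P⁻¹) ^ m * Q := by
  induction m with
  | zero => simp
  | succ k ih =>
    rw [pow_succ, pow_succ, ← mul_assoc, ih]
    simp only [mul_assoc]

private lemma key_identity {n : ℕ} (P Q W : Matrix (Fin n) (Fin n) ℝ) (hP : P * P⁻¹ = 1)
    (hP' : P⁻¹ * P = 1) (m : ℕ) :
    (P - Q) * ((P⁻¹ * Q) ^ m * W * (Q * P⁻¹) ^ m
        + ∑ k ∈ Finset.range (2 * m), (P⁻¹ * Q) ^ k * P⁻¹) - 1
      = (Q * P⁻¹) ^ m * ((P - Q) * W - 1) * (Q * P⁻¹) ^ m := by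
  have h4 : ∀ k : ℕ, (P - Q) * (P⁻¹ * Q) ^ k = (Q * P⁻¹) ^ k * (P - Q) := by
    intro k
    rw [sub_mul, mul_sub, comm_pow P Q hP hP', comm_pow2 P Q]
  have hterm : ∀ k : ℕ, (P - Q) * ((P⁻¹ * Q) ^ k * P⁻¹)
      = (Q * P⁻¹) ^ k - (Q * P⁻¹) ^ (k + 1) := by
    intro k
    rw [← mul_assoc, h4, mul_assoc, sub_mul, mul_sub, hP, mul_one, ← mul_assoc, mul_assoc _ Q P⁻¹, ← pow_succ]
  have hsum : (P - Q) * (∑ k ∈ Finset.range (2 * m), (P⁻¹ * Q) ^ k * P⁻¹)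
      = 1 - (Q * P⁻¹) ^ (2 * m) := by
    rw [Finset.mul_sum]
    simp only [hterm]
    rw [Finset.sum_range_sub' (fun k => (Q * P⁻¹) ^ k)]
    simp
  have hmain : (P - Q) * ((P⁻¹ * Q) ^ m * W * (Q * P⁻¹) ^ m)
      = (Q * P⁻¹) ^ m * ((P - Q) * W) * (Q * P⁻¹) ^ m := by
    calc (P - Q) * ((P⁻¹ * Q) ^ m * W * (Q * P⁻¹) ^ m)
        = ((P - Q) * (P⁻¹ * Q) ^ m) * W * (Q * P⁻¹) ^ m := by simp only [mul_assoc]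
      _ = (Q * P⁻¹) ^ m * ((P - Q) * W) * (Q * P⁻¹) ^ m := by
          rw [h4]; simp only [mul_assoc]
  have hsq : (Q * P⁻¹) ^ (2 * m) = (Q * P⁻¹) ^ m * (Q * P⁻¹) ^ m := by
    rw [two_mul, pow_add]
  rw [mul_add, hmain, hsum, hsq]
  simp only [mul_sub, sub_mul, mul_one, one_mul]
  abel


private lemma opNorm_nonneg {n : ℕ} (M : Matrix (Fin n) (Fin n) ℝ) : 0 ≤ opNorm M :=
  norm_nonneg _

private lemma opNorm_mul_le {n : ℕ} (A B : Matrix (Fin n) (Fin n) ℝ) :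
    opNorm (A * B) ≤ opNorm A * opNorm B := by
  unfold opNorm
  rw [_root_.map_mul]
  exact norm_mul_le _ _

private lemma opNorm_pow_le {n : ℕ} (A : Matrix (Fin n) (Fin n) ℝ) {m : ℕ} (hm : 1 ≤ m) :
    opNorm (A ^ m) ≤ opNorm A ^ m := by
  unfold opNorm
  rw [_root_.map_pow]
  exact norm_pow_le' _ hm

theorem stmt_18 {n : ℕ} (P Q W : Matrix (Fin n) (Fin n) ℝ)
    (hP : P.PosDef) (hQ : Q.PosSemidef) (hA : (P - Q).PosDef)
    (hW : W.PosSemidef) (m : ℕ) (hm : 1 ≤ m) :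
    ∀ x : Fin n → ℝ,
      (((P - Q) * ((P⁻¹ * Q) ^ m * W * (Q * P⁻¹) ^ m
          + ∑ k ∈ Finset.range (2 * m), (P⁻¹ * Q) ^ k * P⁻¹) - 1).mulVec x) ⬝ᵥ
      (((P - Q) * ((P⁻¹ * Q) ^ m * W * (Q * P⁻¹) ^ m
          + ∑ k ∈ Finset.range (2 * m), (P⁻¹ * Q) ^ k * P⁻¹) - 1).mulVec x)
      ≤ opNorm (Q * P⁻¹) ^ (4 * m) * opNorm ((P - Q) * W - 1) ^ 2 * (x ⬝ᵥ x) := by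
  intro x
  have hPu : IsUnit P.det := isUnit_iff_ne_zero.mpr hP.det_pos.ne'
  have hid := key_identity P Q W (Matrix.mul_nonsing_inv P hPu)
    (Matrix.nonsing_inv_mul P hPu) m
  rw [hid]
  set R : Matrix (Fin n) (Fin n) ℝ := (Q * P⁻¹) ^ m with hR
  set B : Matrix (Fin n) (Fin n) ℝ := (P - Q) * W - 1 with hB
  set E : Matrix (Fin n) (Fin n) ℝ := R * B * R with hE
  have hdot : ∀ y : Fin n → ℝ, y ⬝ᵥ y = ‖(WithLp.equiv 2 (Fin n → ℝ)).symm y‖ ^ 2 := by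
    intro y
    rw [← real_inner_self_eq_norm_sq]
    simp [PiLp.inner_apply, dotProduct, RCLike.inner_apply, mul_comm]
    rw [EuclideanSpace.norm_eq, Real.sq_sqrt (Finset.sum_nonneg fun i _ => sq_nonneg _)]
    simp [sq]
  set v : EuclideanSpace ℝ (Fin n) := (WithLp.equiv 2 (Fin n → ℝ)).symm x with hv
  have hEv : (Matrix.toEuclideanCLM (𝕜 := ℝ) E) v
      = (WithLp.equiv 2 (Fin n → ℝ)).symm (E.mulVec x) :=
    Matrix.toEuclideanCLM_toLp E x
  have h1 : (E.mulVec x) ⬝ᵥ (E.mulVec x) = ‖(Matrix.toEuclideanCLM (𝕜 := ℝ) E) v‖ ^ 2 := by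
    rw [hEv, ← hdot]
  rw [h1, hdot x, ← hv]
  set c : ℝ := opNorm (Q * P⁻¹) with hc
  set b : ℝ := opNorm B with hb
  have c0 : 0 ≤ c := opNorm_nonneg _
  have b0 : 0 ≤ b := opNorm_nonneg _
  have hRle : opNorm R ≤ c ^ m := opNorm_pow_le _ hm
  have hEbound : opNorm E ≤ c ^ m * b * c ^ m := by
    calc opNorm E ≤ opNorm (R * B) * opNorm R := opNorm_mul_le _ _
      _ ≤ (opNorm R * opNorm B) * opNorm R :=
          mul_le_mul_of_nonneg_right (opNorm_mul_le _ _) (opNorm_nonneg _)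
      _ ≤ (c ^ m * b) * c ^ m := by
          apply mul_le_mul _ hRle (opNorm_nonneg _) (mul_nonneg (pow_nonneg c0 m) b0)
          exact mul_le_mul_of_nonneg_right hRle b0
  have hle : ‖(Matrix.toEuclideanCLM (𝕜 := ℝ) E) v‖ ≤ opNorm E * ‖v‖ :=
    (Matrix.toEuclideanCLM (𝕜 := ℝ) E).le_opNorm v
  have hle2 : ‖(Matrix.toEuclideanCLM (𝕜 := ℝ) E) v‖ ≤ c ^ m * b * c ^ m * ‖v‖ :=
    hle.trans (mul_le_mul_of_nonneg_right hEbound (norm_nonneg _))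
  have hsq : ‖(Matrix.toEuclideanCLM (𝕜 := ℝ) E) v‖ ^ 2 ≤ (c ^ m * b * c ^ m * ‖v‖) ^ 2 :=
    pow_le_pow_left₀ (norm_nonneg _) hle2 2
  refine hsq.trans (le_of_eq ?_)
  rw [show 4 * m = m * 4 by ring, pow_mul]
  ring
end

section
/- For the two-level recursive preconditioner with exact coarse inverse, M⁻¹ = (P⁻¹Q)^m E A_c⁻¹ Eᵀ (QP⁻¹)^m + Σ_{k=0}^{2m-1}(P⁻¹Q)^k P⁻¹, where P is symmetric positive definite, Q symmetric positive semidefinite, A_c symmetric positive definite, and E any n×m real matrix, M⁻¹ is symmetric positive definite. -/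
open Matrix

private lemma semiconj_pow {R : Type*} [Ring R] (a b : R) (j : ℕ) :
    a * (b * a) ^ j = (a * b) ^ j * a :=
  (SemiconjBy.pow_right (by simp [SemiconjBy, mul_assoc]) j)

theorem stmt_19 {n mc : ℕ} (hmc : mc < n)
    (P Q : Matrix (Fin n) (Fin n) ℝ) (Ac : Matrix (Fin mc) (Fin mc) ℝ)
    (E : Matrix (Fin n) (Fin mc) ℝ)
    (hP : P.PosDef) (hQ : Q.PosSemidef) (hAc : Ac.PosDef)
    (m : ℕ) (hm : 1 ≤ m) :
    ((P⁻¹ * Q) ^ m * (E * Ac⁻¹ * Eᵀ) * (Q * P⁻¹) ^ m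
        + ∑ k ∈ Finset.range (2 * m), (P⁻¹ * Q) ^ k * P⁻¹).PosDef := by
  have hPinv : (P⁻¹).PosDef := hP.inv
  have hPh : (P⁻¹)ᴴ = P⁻¹ := hPinv.isHermitian
  have hQh : Qᴴ = Q := hQ.isHermitian
  have hpowh : ∀ j : ℕ, ((P⁻¹ * Q) ^ j)ᴴ = (Q * P⁻¹) ^ j := by
    intro j
    rw [conjTranspose_pow, conjTranspose_mul, hPh, hQh]
  -- each summand is positive semidefinite
  have hterm : ∀ k : ℕ, ((P⁻¹ * Q) ^ k * P⁻¹).PosSemidef := by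
    intro k
    rcases Nat.even_or_odd k with ⟨j, hj⟩ | ⟨j, hj⟩
    · have heq : (P⁻¹ * Q) ^ k * P⁻¹
          = (P⁻¹ * Q) ^ j * P⁻¹ * ((P⁻¹ * Q) ^ j)ᴴ := by
        rw [hpowh, hj, ← two_mul, two_mul, pow_add, mul_assoc, mul_assoc,
          ← semiconj_pow]
      rw [heq]
      exact hPinv.posSemidef.mul_mul_conjTranspose_same _
    · have heq : (P⁻¹ * Q) ^ k * P⁻¹
          = ((P⁻¹ * Q) ^ j * P⁻¹) * Q * ((P⁻¹ * Q) ^ j * P⁻¹)ᴴ := by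
        rw [conjTranspose_mul, hpowh, hPh, semiconj_pow, hj,
          show 2 * j + 1 = (j + 1) + j by omega, pow_add, pow_succ]
        simp only [mul_assoc]
      rw [heq]
      exact hQ.mul_mul_conjTranspose_same _
  -- the first term is positive semidefinite
  have hE : (E * Ac⁻¹ * Eᵀ).PosSemidef := by
    rw [← conjTranspose_eq_transpose_of_trivial]
    exact hAc.inv.posSemidef.mul_mul_conjTranspose_same E
  have hfirst : ((P⁻¹ * Q) ^ m * (E * Ac⁻¹ * Eᵀ) * (Q * P⁻¹) ^ m).PosSemidef := by
    rw [← hpowh]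
    exact hE.mul_mul_conjTranspose_same _
  -- split off the k = 0 term
  obtain ⟨j, hj⟩ : ∃ j, 2 * m = j + 1 := ⟨2 * m - 1, by omega⟩
  rw [hj, Finset.sum_range_succ']
  simp only [pow_zero, one_mul]
  have hsum : (∑ i ∈ Finset.range j, (P⁻¹ * Q) ^ (i + 1) * P⁻¹).PosSemidef := by
    exact Finset.sum_induction _ (fun M : Matrix (Fin n) (Fin n) ℝ => M.PosSemidef)
      (fun a b ha hb => ha.add hb) .zero fun i _ => hterm (i + 1)
  rw [← add_assoc]
  exact PosDef.posSemidef_add (hfirst.add hsum) hPinv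
end
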